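/- The number of orbits of the conjugation action of Sₙ (via permutation matrices) on the set M(n) of n×n ℤ/2-matrices with all principal minors equal to 1 equals the number of isomorphism classes of acyclic digraphs on n vertices. -/

import Mathlib

/-!
The bijection sends `A` to the digraph of its off-diagonal ones, with inverse `G ↦ 1 + adjMat G`,
and it turns conjugation by permutation matrices into relabelling of vertices.

If `G` is acyclic, ordering the vertices by their number of predecessors makes every principal
submatrix of `1 + adjMat G` block triangular with identity blocks, so its determinant is `1`.
Conversely, if the digraph of `A` has a cycle, it has a minimal nonempty sink-free vertex set `S`.
Any choice of successors is a self-map of `S` whose image is again sink-free, hence all of `S`, so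
it is a permutation; two choices differing at one vertex cannot both be injective, so each vertex
of `S` has exactly one successor in `S`. Every row of the principal submatrix on `S` then sums to
`1 + 1 = 0` in `ZMod 2`, and its determinant vanishes.
-/

open Matrix

/-- The principal minor of `A` indexed by the subset `s` (rows and columns). -/
def pminor {m : Type*} [Fintype m] [DecidableEq m] {R : Type*} [CommRing R]
    (A : Matrix m m R) (s : Finset m) : R :=
  (A.submatrix (fun i : s => (i : m)) (fun j : s => (j : m))).det


/-- Adjacency matrix over `ZMod 2` of a digraph on `n` labeled vertices. -/
def adjMat {n : ℕ} (G : Fin n → Fin n → Bool) : Matrix (Fin n) (Fin n) (ZMod 2) :=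
  Matrix.of fun i j => if G i j then 1 else 0

/-- A digraph is acyclic if it has no directed cycle (of any length). -/
def IsAcyclicDigraph {n : ℕ} (G : Fin n → Fin n → Bool) : Prop :=
  ∀ i, ¬ Relation.TransGen (fun a b => G a b = true) i i

open Finset

section Acyclic

variable {α : Type*} {r : α → α → Prop}

lemma exists_rank_of_acyclic [Fintype α] (hr : ∀ a, ¬ Relation.TransGen r a a) :
    ∃ f : α → ℕ, ∀ a b, r a b → f a < f b := by
  classical
  refine ⟨fun x => #{y | Relation.TransGen r y x}, fun a b hab => card_lt_card ?_⟩
  refine (ssubset_iff_of_subset fun y hy => ?_).2 ⟨a, ?_, ?_⟩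
  · simp only [mem_filter, mem_univ, true_and] at hy ⊢
    exact hy.tail hab
  · simpa using Relation.TransGen.single hab
  · simpa using hr a

theorem Matrix.det_eq_one_of_acyclic {m R : Type*} [Fintype m] [DecidableEq m] [CommRing R]
    {M : Matrix m m R} {r : m → m → Prop} (hr : ∀ a, ¬ Relation.TransGen r a a)
    (hdiag : ∀ i, M i i = 1) (hoff : ∀ i j, i ≠ j → M i j ≠ 0 → r i j) : M.det = 1 := by
  obtain ⟨f, hf⟩ := exists_rank_of_acyclic hr
  have hzero : ∀ i j, i ≠ j → ¬ f i < f j → M i j = 0 := fun i j hne hij =>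
    by_contra fun h => hij (hf i j (hoff i j hne h))
  have htri : M.BlockTriangular f := fun i j hji =>
    hzero i j (by rintro rfl; omega) (by omega)
  rw [htri.det]
  refine prod_eq_one fun k _ => ?_
  have hblock : M.toSquareBlock f k = 1 := by
    ext ⟨i, hi⟩ ⟨j, hj⟩
    by_cases hij : i = j
    · subst hij
      simp [toSquareBlock_def, hdiag]
    · simp [toSquareBlock_def, hzero i j hij (by omega), hij]
  rw [hblock, det_one]

def IsSinkFree (r : α → α → Prop) (S : Finset α) : Prop :=
  S.Nonempty ∧ ∀ p ∈ S, ∃ q ∈ S, r p q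

lemma exists_isSinkFree_of_transGen [Fintype α] {i : α} (h : Relation.TransGen r i i) :
    ∃ S, IsSinkFree r S := by
  classical
  refine ⟨({x | Relation.TransGen r x i} : Finset α), ⟨i, by simpa using h⟩, 
    fun p hp => ?_⟩
  obtain ⟨q, hpq, hqi⟩ := Relation.TransGen.head'_iff.1 (by simpa using hp)
  exact ⟨q, by simpa using Relation.TransGen.trans_right hqi h, hpq⟩

variable [DecidableEq α] {S : Finset α}

lemma Minimal.image_eq_of_isSinkFree (hS : Minimal (IsSinkFree r) S) {g : α → α}
    (hg : ∀ p ∈ S, g p ∈ S ∧ r p (g p)) : S.image g = S := by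
  refine hS.eq_of_le ⟨hS.prop.1.image g, ?_⟩ fun _ hq => ?_
  · simp only [mem_image, forall_exists_index, and_imp]
    rintro _ p hp rfl
    exact ⟨g (g p), ⟨g p, (hg p hp).1, rfl⟩, (hg _ (hg p hp).1).2⟩
  · obtain ⟨p, hp, rfl⟩ := mem_image.1 hq
    exact (hg p hp).1

lemma Minimal.eq_of_isSinkFree (hS : Minimal (IsSinkFree r) S) {p q₁ q₂ : α}
    (hp : p ∈ S) (hq₁ : q₁ ∈ S) (h₁ : r p q₁) (hq₂ : q₂ ∈ S) (h₂ : r p q₂) :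
    q₁ = q₂ := by
  choose! g hg using hS.prop.2
  have hsel : ∀ q ∈ S, r p q →
      ∀ x ∈ S, Function.update g p q x ∈ S ∧ r x (Function.update g p q x) := by
    intro q hq hpq x hx
    rcases eq_or_ne x p with rfl | hxp
    · simpa using ⟨hq, hpq⟩
    · simpa [hxp] using hg x hx
  have hsurj := Minimal.image_eq_of_isSinkFree hS (hsel q₁ hq₁ h₁)
  have hinj : Set.InjOn (Function.update g p q₂) S := by
    rw [← card_image_iff, Minimal.image_eq_of_isSinkFree hS (hsel q₂ hq₂ h₂)]
  obtain ⟨x, hx, hxq⟩ := mem_image.1 (hsurj.symm ▸ hq₂)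
  rcases eq_or_ne x p with rfl | hxp
  · simpa using hxq
  · exact absurd (hinj hx hp (by simpa [hxp] using hxq)) hxp

end Acyclic

section PrincipalMinors

variable {m R : Type*} [Fintype m] [DecidableEq m] [CommRing R]

lemma pminor_singleton (A : Matrix m m R) (i : m) : pminor A {i} = A i i := by
  rw [pminor, det_unique]
  rfl

theorem not_transGen_of_pminor_eq_one {A : Matrix m m (ZMod 2)} (hA : ∀ s, pminor A s = 1)
    (i : m) : ¬ Relation.TransGen (fun a b => a ≠ b ∧ A a b = 1) i i := by
  intro h
  obtain ⟨S, hS⟩ := exists_minimal_of_wellFoundedLT _ (exists_isSinkFree_of_transGen h)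
  have hrow : ∀ p ∈ S, ∑ q ∈ S, A p q = 0 := by
    intro p hp
    obtain ⟨w, hw, hpw, hwp⟩ := hS.prop.2 p hp
    rw [sum_eq_add_of_mem p w hp hw hpw fun q hq ⟨hqp, hqw⟩ => ?_]
    · rw [← pminor_singleton A p, hA, hwp]
      decide
    · by_contra hne
      exact hqw <|
        hS.eq_of_isSinkFree hp hq ⟨Ne.symm hqp, Fin.eq_one_of_ne_zero _ hne⟩ hw ⟨hpw, hwp⟩
  have hker : A.submatrix (fun i : S => (i : m)) (fun j : S => (j : m)) *ᵥ (fun _ => 1) = 0 := by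
    ext ⟨p, hp⟩
    simpa [mulVec, dotProduct, sum_attach S (fun q => A p q)] using hrow p hp
  have hdet := exists_mulVec_eq_zero_iff.1 ⟨_, fun h1 => ?_, hker⟩
  · exact zero_ne_one (hdet.symm.trans (hA S))
  · obtain ⟨p, hp⟩ := hS.prop.1
    simpa using congrFun h1 ⟨p, hp⟩

end PrincipalMinors

lemma Equiv.Perm.inv_permMatrix {ι R : Type*} [Fintype ι] [DecidableEq ι] [CommRing R]
    (σ : Equiv.Perm ι) : (σ.permMatrix R)⁻¹ = σ⁻¹.permMatrix R :=
  inv_eq_right_inv <| by rw [← permMatrix_mul, inv_mul_cancel, permMatrix_one]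

lemma Equiv.Perm.inv_permMatrix_mul_mul_permMatrix {ι R : Type*} [Fintype ι] [DecidableEq ι]
    [CommRing R] (σ : Equiv.Perm ι) (A : Matrix ι ι R) :
    (σ.permMatrix R)⁻¹ * A * σ.permMatrix R = A.submatrix σ.symm σ.symm := by
  rw [inv_permMatrix, permMatrix, permMatrix, PEquiv.toMatrix_toPEquiv_mul,
    PEquiv.mul_toMatrix_toPEquiv, submatrix_submatrix]
  rfl

section Digraphs

variable {n : ℕ}

def offDiagGraph (A : Matrix (Fin n) (Fin n) (ZMod 2)) : Fin n → Fin n → Bool :=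
  fun i j => decide (i ≠ j ∧ A i j = 1)

lemma one_add_adjMat_offDiagGraph {A : Matrix (Fin n) (Fin n) (ZMod 2)} (hA : ∀ i, A i i = 1) :
    1 + adjMat (offDiagGraph A) = A := by
  ext i j
  rcases eq_or_ne i j with rfl | hij
  · simp [adjMat, offDiagGraph, hA]
  · by_cases h : A i j = 0
    · simp [adjMat, offDiagGraph, hij, h]
    · have h1 : A i j = 1 := Fin.eq_one_of_ne_zero _ h
      simp [adjMat, offDiagGraph, hij, h1]

lemma offDiagGraph_one_add_adjMat {G : Fin n → Fin n → Bool} (hG : ∀ i, G i i = false) :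
    offDiagGraph (1 + adjMat G) = G := by
  ext i j
  rcases eq_or_ne i j with rfl | hij
  · simp [offDiagGraph, hG]
  · cases h : G i j <;> simp [adjMat, offDiagGraph, hij, h]

lemma isAcyclicDigraph_offDiagGraph {A : Matrix (Fin n) (Fin n) (ZMod 2)}
    (hA : ∀ s, pminor A s = 1) : IsAcyclicDigraph (offDiagGraph A) := fun i h =>
  not_transGen_of_pminor_eq_one hA i <|
    Relation.TransGen.mono (fun a b hab => by simpa [offDiagGraph] using hab) i i h

lemma pminor_one_add_adjMat {G : Fin n → Fin n → Bool} (hG : ∀ i, G i i = false)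
    (hacyc : IsAcyclicDigraph G) (s : Finset (Fin n)) : pminor (1 + adjMat G) s = 1 := by
  refine det_eq_one_of_acyclic (r := fun i j : s => G i j = true)
    (fun i h => hacyc i (Relation.TransGen.lift _ (fun _ _ => id) i i h))
    (fun i => by simp [adjMat, hG]) fun i j hij h => ?_
  have hij' : (i : Fin n) ≠ j := Subtype.coe_injective.ne hij
  by_contra hG'
  simp [adjMat, one_apply, hij', hG'] at h

lemma diag_eq_one_of_pminor_eq_one {A : Matrix (Fin n) (Fin n) (ZMod 2)}
    (hA : ∀ s, pminor A s = 1) (i : Fin n) : A i i = 1 :=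
  pminor_singleton A i ▸ hA {i}

def pminorOneEquivAcyclic (n : ℕ) :
    {A : Matrix (Fin n) (Fin n) (ZMod 2) // ∀ s, pminor A s = 1} ≃
      {G : Fin n → Fin n → Bool // (∀ i, G i i = false) ∧ IsAcyclicDigraph G} where
  toFun A :=
    ⟨offDiagGraph A, fun i => by simp [offDiagGraph], isAcyclicDigraph_offDiagGraph A.2⟩
  invFun G := ⟨1 + adjMat G, pminor_one_add_adjMat G.2.1 G.2.2⟩
  left_inv A := Subtype.ext (one_add_adjMat_offDiagGraph (diag_eq_one_of_pminor_eq_one A.2))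
  right_inv G := Subtype.ext (offDiagGraph_one_add_adjMat G.2.1)

lemma submatrix_eq_iff_offDiagGraph {A B : Matrix (Fin n) (Fin n) (ZMod 2)}
    (hA : ∀ i, A i i = 1) (hB : ∀ i, B i i = 1) (σ : Equiv.Perm (Fin n)) :
    B = A.submatrix σ.symm σ.symm ↔
      ∀ i j, offDiagGraph A i j = offDiagGraph B (σ i) (σ j) := by
  refine ⟨?_, fun h => ?_⟩
  · rintro rfl i j
    simp [offDiagGraph]
  · rw [← one_add_adjMat_offDiagGraph hA, ← one_add_adjMat_offDiagGraph hB]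
    ext k l
    simp [adjMat, one_apply, h]

end Digraphs

theorem stmt_14 {n : ℕ} :
    Nat.card (Quot (fun A B : {A : Matrix (Fin n) (Fin n) (ZMod 2) //
          ∀ s : Finset (Fin n), pminor A s = 1} =>
        ∃ μ : Equiv.Perm (Fin n),
          B.1 = (μ.permMatrix (ZMod 2))⁻¹ * A.1 * μ.permMatrix (ZMod 2))) =
    Nat.card (Quot (fun G H : {G : Fin n → Fin n → Bool //
          (∀ i, G i i = false) ∧ IsAcyclicDigraph G} =>
        ∃ e : Equiv.Perm (Fin n), ∀ i j, G.1 i j = H.1 (e i) (e j))) := by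
  refine Nat.card_congr (Quot.congr (pminorOneEquivAcyclic n) fun A B => exists_congr fun σ => ?_)
  rw [σ.inv_permMatrix_mul_mul_permMatrix]
  exact submatrix_eq_iff_offDiagGraph (diag_eq_one_of_pminor_eq_one A.2)
    (diag_eq_one_of_pminor_eq_one B.2) σ
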